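/- Let λ_1 < λ_2 < ... < λ_n be real numbers with λ_{k+1} − λ_k ≥ δ > 0 for all k, and let c_1, ..., c_n ∈ ℂ. Then for T > 0, (1/T)∫_0^T |Σ_k c_k e^{iλ_k t}|² dt ≥ (1 − 2π/(Tδ)) Σ_k |c_k|². In particular, if T > 4π/δ, then (1/T)∫_0^T |Σ_k c_k e^{iλ_k t}|² dt ≥ (1/2) Σ_k |c_k|². -/

import Mathlib

/-!
Expanding the square and integrating term by term,
`∫₀ᵀ |∑ cₖ e^{iλₖt}|² dt = T ∑ |cₖ|² - i (H(d) - H(c))`, where `dₖ = cₖ e^{iλₖT}` and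
`H(z) = ∑_{r ≠ s} z_r z̄_s / (λ_r - λ_s)`. So it suffices to prove the Montgomery–Vaughan
generalised Hilbert inequality `|H(z)| ≤ (π/δ) ∑ |z_r|²`.

The matrix `i K`, `K_rs = 1/(λ_r - λ_s)`, is Hermitian, so it is enough to bound its eigenvalues.
If `K w = i ν w`, expand `ν² ‖w‖² = ‖K w‖²`: by the identity
`K_rs K_rt = (K_rs - K_rt) K_st` the off-diagonal part collapses to terms that cancel by the
eigenvalue equation. What remains is `∑_s |w_s|² ∑_r K_rs² + 2 ∑_{s,t} w_s w̄_t K_st²`, and both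
sums are at most `B ‖w‖²` with `B = max_s ∑_r K_rs² ≤ 2 ζ(2) / δ² = π² / (3δ²)`; hence
`ν² ≤ 3B = π²/δ²`.
-/

open Complex Real Finset ComplexConjugate MeasureTheory

theorem LinearMap.IsSymmetric.norm_inner_map_self_le {𝕜 E : Type*} [RCLike 𝕜]
    [NormedAddCommGroup E] [InnerProductSpace 𝕜 E] [FiniteDimensional 𝕜 E]
    {T : E →ₗ[𝕜] E} (hT : T.IsSymmetric) {C : ℝ}
    (hC : ∀ μ : ℝ, Module.End.HasEigenvalue T μ → |μ| ≤ C) (x : E) :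
    ‖inner 𝕜 (T x) x‖ ≤ C * ‖x‖ ^ 2 := by
  set b := hT.eigenvectorBasis rfl
  have hb : ∀ i, inner 𝕜 (T x) (b i) = hT.eigenvalues rfl i * inner 𝕜 x (b i) := by
    intro i
    rw [hT, hT.apply_eigenvectorBasis, inner_smul_right]
  calc ‖inner 𝕜 (T x) x‖ = ‖∑ i, inner 𝕜 (T x) (b i) * inner 𝕜 (b i) x‖ := by
        rw [b.sum_inner_mul_inner]
    _ ≤ ∑ i, |hT.eigenvalues rfl i| * ‖inner 𝕜 (b i) x‖ ^ 2 := by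
        refine (norm_sum_le _ _).trans_eq (Finset.sum_congr rfl fun i _ => ?_)
        rw [hb, norm_mul, norm_mul, RCLike.norm_ofReal, ← inner_conj_symm, RCLike.norm_conj]
        ring
    _ ≤ ∑ i, C * ‖inner 𝕜 (b i) x‖ ^ 2 := by
        gcongr with i
        exact hC _ (hT.hasEigenvalue_eigenvalues rfl i)
    _ = C * ‖x‖ ^ 2 := by rw [← Finset.mul_sum, b.sum_sq_norm_inner_right]

theorem sum_inv_sq_le_of_separated {ι : Type*} (s : Finset ι) (x : ι → ℝ) {δ : ℝ} (hδ : 0 < δ)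
    (hpos : ∀ i ∈ s, δ ≤ x i) (hsep : ∀ i ∈ s, ∀ j ∈ s, i ≠ j → δ ≤ |x i - x j|) :
    ∑ i ∈ s, (x i)⁻¹ ^ 2 ≤ π ^ 2 / 6 / δ ^ 2 := by
  set m : ι → ℕ := fun i => ⌊x i / δ⌋₊
  have hm : ∀ i ∈ s, 1 ≤ m i ∧ δ * m i ≤ x i ∧ x i < δ * (m i + 1) := by
    intro i hi
    have h1 : 1 ≤ x i / δ := (one_le_div hδ).2 (hpos i hi)
    refine ⟨Nat.le_floor (by simpa using h1), ?_, ?_⟩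
    · rw [← le_div_iff₀' hδ]; exact Nat.floor_le (by linarith)
    · rw [← div_lt_iff₀' hδ]; exact Nat.lt_floor_add_one _
  have hinj : Set.InjOn m s := by
    intro i hi j hj hij
    by_contra hne
    have hi' := hm i hi; have hj' := hm j hj
    rw [hij] at hi'
    exact (hsep i hi j hj hne).not_gt (abs_sub_lt_iff.2 ⟨by linarith, by linarith⟩)
  calc ∑ i ∈ s, (x i)⁻¹ ^ 2 ≤ ∑ i ∈ s, (δ ^ 2)⁻¹ * (1 / (m i : ℝ) ^ 2) := by
        refine sum_le_sum fun i hi => ?_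
        obtain ⟨h1, h2, -⟩ := hm i hi
        have : (0 : ℝ) < δ * m i := by positivity
        rw [← one_div, div_pow, one_pow, one_div, one_div, ← mul_inv, ← mul_pow]
        gcongr
    _ = (δ ^ 2)⁻¹ * ∑ k ∈ s.image m, 1 / (k : ℝ) ^ 2 := by rw [sum_image hinj, mul_sum]
    _ ≤ (δ ^ 2)⁻¹ * (π ^ 2 / 6) := by
        gcongr
        rw [← hasSum_zeta_two.tsum_eq]
        exact hasSum_zeta_two.summable.sum_le_tsum _ fun k _ => by positivity
    _ = π ^ 2 / 6 / δ ^ 2 := by ring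

theorem sum_sum_mul_mul_le_of_sum_le {ι : Type*} [Fintype ι] {M : ι → ι → ℝ} {B : ℝ}
    (hM : ∀ s t, 0 ≤ M s t) (hrow : ∀ s, ∑ t, M s t ≤ B) (hcol : ∀ t, ∑ s, M s t ≤ B)
    (x : ι → ℝ) : ∑ s, ∑ t, x s * x t * M s t ≤ B * ∑ s, x s ^ 2 := by
  calc ∑ s, ∑ t, x s * x t * M s t
      ≤ ∑ s, ∑ t, (x s ^ 2 / 2 * M s t + x t ^ 2 / 2 * M s t) := by
        gcongr with s _ t _
        nlinarith [hM s t, mul_nonneg (hM s t) (sq_nonneg (x s - x t))]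
    _ = ∑ s, x s ^ 2 / 2 * ∑ t, M s t + ∑ t, x t ^ 2 / 2 * ∑ s, M s t := by
        simp only [sum_add_distrib, mul_sum]
        rw [sum_comm (f := fun s t => x t ^ 2 / 2 * M s t)]
    _ ≤ ∑ s, x s ^ 2 / 2 * B + ∑ t, x t ^ 2 / 2 * B := by
        gcongr with s _ t _
        exacts [hrow s, hcol t]
    _ = B * ∑ s, x s ^ 2 := by rw [← sum_add_distrib, mul_sum]; congr 1; ext; ring

/-- Vanishes on the diagonal, since `0⁻¹ = 0`. -/
noncomputable def hilbertKernel {ι : Type*} (lam : ι → ℝ) (r s : ι) : ℝ := (lam r - lam s)⁻¹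

namespace hilbertKernel

variable {ι : Type*} (lam : ι → ℝ)

@[simp] theorem self (r : ι) : hilbertKernel lam r r = 0 := by simp [hilbertKernel]

theorem antisymm (r s : ι) : hilbertKernel lam s r = -hilbertKernel lam r s := by
  rw [hilbertKernel, hilbertKernel, ← inv_neg, neg_sub]

variable {lam}

theorem mul_eq_of_ne (hinj : Function.Injective lam) {r s t : ι} (hrs : r ≠ s) (hrt : r ≠ t)
    (hst : s ≠ t) :
    hilbertKernel lam r s * hilbertKernel lam r t =
      (hilbertKernel lam r s - hilbertKernel lam r t) * hilbertKernel lam s t := by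
  have := sub_ne_zero.2 (hinj.ne hrs)
  have := sub_ne_zero.2 (hinj.ne hrt)
  have := sub_ne_zero.2 (hinj.ne hst)
  simp only [hilbertKernel]
  field_simp
  ring

theorem sum_mul_eq [Fintype ι] [DecidableEq ι] (hinj : Function.Injective lam) (s t : ι) :
    ∑ r, hilbertKernel lam r s * hilbertKernel lam r t =
      (if s = t then ∑ r, hilbertKernel lam r s ^ 2 else 0) +
        (∑ r, hilbertKernel lam r s - ∑ r, hilbertKernel lam r t) * hilbertKernel lam s t +
          2 * hilbertKernel lam s t ^ 2 := by
  by_cases hst : s = t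
  · subst hst; simp [sq]
  have hterm : ∀ r, hilbertKernel lam r s * hilbertKernel lam r t =
      (hilbertKernel lam r s - hilbertKernel lam r t) * hilbertKernel lam s t +
        ((if r = s then hilbertKernel lam s t ^ 2 else 0) +
          if r = t then hilbertKernel lam s t ^ 2 else 0) := by
    intro r
    by_cases hrs : r = s
    · subst hrs; simp [hst]; ring
    by_cases hrt : r = t
    · subst hrt; simp [hrs, antisymm lam r s]; ring
    simp [hrs, hrt, mul_eq_of_ne hinj hrs hrt hst]
  simp only [hterm, sum_add_distrib, sum_ite_eq', mem_univ, if_true, if_neg hst, ← Finset.sum_mul,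
    sum_sub_distrib]
  ring

theorem sum_sq_le [Fintype ι] {δ : ℝ} (hδ : 0 < δ) (hsep : Pairwise fun r s => δ ≤ |lam r - lam s|)
    (s : ι) : ∑ r, hilbertKernel lam r s ^ 2 ≤ π ^ 2 / (3 * δ ^ 2) := by
  classical
  have hsplit : ∀ r, hilbertKernel lam r s ^ 2 =
      (if lam s < lam r then (lam r - lam s)⁻¹ ^ 2 else 0) +
        if lam r < lam s then (lam s - lam r)⁻¹ ^ 2 else 0 := by
    intro r
    rcases lt_trichotomy (lam r) (lam s) with h | h | h
    · rw [if_neg h.not_gt, if_pos h, zero_add, hilbertKernel, ← neg_sub, inv_neg, neg_sq]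
    · simp [hilbertKernel, h]
    · simp [hilbertKernel, h, h.not_gt]
  simp only [hsplit, sum_add_distrib, ← sum_filter]
  have h1 := sum_inv_sq_le_of_separated {r | lam s < lam r} (fun r => lam r - lam s) hδ
    (fun r hr => by
      rw [mem_filter_univ] at hr
      simpa [abs_of_pos (sub_pos.2 hr)] using hsep (ne_of_apply_ne lam hr.ne'))
    (fun i _ j _ hij => by simpa using hsep hij)
  have h2 := sum_inv_sq_le_of_separated {r | lam r < lam s} (fun r => lam s - lam r) hδ
    (fun r hr => by
      rw [mem_filter_univ] at hr
      simpa [abs_of_neg (sub_neg.2 hr), abs_sub_comm] using hsep (ne_of_apply_ne lam hr.ne))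
    (fun i _ j _ hij => by simpa [abs_sub_comm] using hsep hij)
  calc _ ≤ π ^ 2 / 6 / δ ^ 2 + π ^ 2 / 6 / δ ^ 2 := add_le_add h1 h2
    _ = _ := by field_simp; ring

theorem sum_mul_conj_sum [Fintype ι] (w : ι → ℂ) (r : ι) :
    (∑ s, (hilbertKernel lam r s : ℂ) * w s) * conj (∑ t, (hilbertKernel lam r t : ℂ) * w t) =
      ∑ s, ∑ t, w s * conj (w t) * (hilbertKernel lam r s * hilbertKernel lam r t : ℝ) := by
  simp only [map_sum, map_mul, conj_ofReal, sum_mul_sum]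
  refine sum_congr rfl fun s _ => sum_congr rfl fun t _ => ?_
  push_cast; ring

section Eigenvector

variable [Fintype ι] {w : ι → ℂ} {ν : ℝ}

theorem sum_sum_colSum_sub_mul_eq_zero
    (hw : ∀ r, ∑ s, (hilbertKernel lam r s : ℂ) * w s = I * ν * w r) :
    ∑ s, ∑ t, w s * conj (w t) *
      ((∑ r, hilbertKernel lam r s - ∑ r, hilbertKernel lam r t) * hilbertKernel lam s t : ℝ) =
        0 := by
  have hw' : ∀ t, ∑ s, (hilbertKernel lam s t : ℂ) * w s = -(I * ν * w t) := by
    intro t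
    simp only [antisymm lam t, ofReal_neg, neg_mul, sum_neg_distrib, hw t]
  set K := hilbertKernel lam
  set σ : ι → ℝ := fun s => ∑ r, K r s
  calc ∑ s, ∑ t, w s * conj (w t) * ((σ s - σ t) * K s t : ℝ)
      = ∑ s, (σ s : ℂ) * w s * conj (∑ t, (K s t : ℂ) * w t)
        - ∑ t, (σ t : ℂ) * conj (w t) * ∑ s, (K s t : ℂ) * w s := by
        simp only [map_sum, map_mul, conj_ofReal, mul_sum]
        rw [sum_comm (f := fun t s => (σ t : ℂ) * conj (w t) * ((K s t : ℂ) * w s)),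
          ← sum_sub_distrib]
        refine sum_congr rfl fun s _ => ?_
        rw [← sum_sub_distrib]
        refine sum_congr rfl fun t _ => ?_
        push_cast; ring
    _ = 0 := by
        simp only [hw, hw', ← sum_sub_distrib, map_mul, conj_I, conj_ofReal]
        exact sum_eq_zero fun s _ => by ring

theorem sq_mul_sum_norm_sq_eq (hinj : Function.Injective lam)
    (hw : ∀ r, ∑ s, (hilbertKernel lam r s : ℂ) * w s = I * ν * w r) :
    ((ν ^ 2 * ∑ r, ‖w r‖ ^ 2 : ℝ) : ℂ) =
      ∑ s, ((‖w s‖ ^ 2 * ∑ r, hilbertKernel lam r s ^ 2 : ℝ) : ℂ) +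
        2 * ∑ s, ∑ t, w s * conj (w t) * (hilbertKernel lam s t ^ 2 : ℝ) := by
  classical
  have hcross := sum_sum_colSum_sub_mul_eq_zero hw
  have hG := sum_mul_eq hinj (lam := lam)
  have hexpand := sum_mul_conj_sum (lam := lam) w
  set K := hilbertKernel lam
  have hdiag : ∀ s, ∑ t, w s * conj (w t) * ((if s = t then ∑ r, K r s ^ 2 else 0 : ℝ) : ℂ) =
      ((‖w s‖ ^ 2 * ∑ r, K r s ^ 2 : ℝ) : ℂ) := by
    intro s
    rw [sum_eq_single_of_mem s (mem_univ s) fun t _ hts => by simp [Ne.symm hts], if_pos rfl,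
      mul_conj, normSq_eq_norm_sq]
    push_cast; ring
  calc ((ν ^ 2 * ∑ r, ‖w r‖ ^ 2 : ℝ) : ℂ)
      = ∑ r, (∑ s, (K r s : ℂ) * w s) * conj (∑ t, (K r t : ℂ) * w t) := by
        push_cast
        rw [mul_sum]
        refine sum_congr rfl fun r _ => ?_
        rw [hw r, mul_conj, normSq_eq_norm_sq]
        simp [mul_pow]
    _ = ∑ s, ∑ t, w s * conj (w t) * (∑ r, K r s * K r t : ℝ) := by
        simp only [hexpand, ofReal_sum, mul_sum]
        rw [sum_comm]
        exact sum_congr rfl fun s _ => sum_comm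
    _ = _ := by
        simp only [hG, ofReal_add, mul_add, sum_add_distrib, hdiag, hcross, add_zero, mul_sum]
        refine congrArg _ (sum_congr rfl fun s _ => sum_congr rfl fun t _ => ?_)
        push_cast; ring

theorem eigenvalue_sq_mul_le (hinj : Function.Injective lam) {B : ℝ}
    (hB : ∀ s, ∑ r, hilbertKernel lam r s ^ 2 ≤ B)
    (hw : ∀ r, ∑ s, (hilbertKernel lam r s : ℂ) * w s = I * ν * w r) :
    ν ^ 2 * ∑ r, ‖w r‖ ^ 2 ≤ 3 * B * ∑ r, ‖w r‖ ^ 2 := by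
  have hid := sq_mul_sum_norm_sq_eq hinj hw
  have hrow : ∀ s, ∑ t, hilbertKernel lam s t ^ 2 ≤ B := fun s => by
    simpa [antisymm lam s] using hB s
  set K := hilbertKernel lam
  have hnorm : ‖∑ s, ∑ t, w s * conj (w t) * (K s t ^ 2 : ℝ)‖ ≤
      ∑ s, ∑ t, ‖w s‖ * ‖w t‖ * K s t ^ 2 := by
    refine (norm_sum_le _ _).trans (sum_le_sum fun s _ => (norm_sum_le _ _).trans_eq ?_)
    simp
  calc ν ^ 2 * ∑ r, ‖w r‖ ^ 2 = ‖((ν ^ 2 * ∑ r, ‖w r‖ ^ 2 : ℝ) : ℂ)‖ := by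
        rw [norm_real, Real.norm_of_nonneg (by positivity)]
    _ ≤ ∑ s, ‖w s‖ ^ 2 * ∑ r, K r s ^ 2 + 2 * ∑ s, ∑ t, ‖w s‖ * ‖w t‖ * K s t ^ 2 := by
        rw [hid, ← ofReal_sum]
        refine (norm_add_le _ _).trans (add_le_add ?_ ?_)
        · rw [norm_real, Real.norm_of_nonneg (by positivity)]
        · rw [norm_mul, RCLike.norm_two]
          gcongr
    _ ≤ ∑ s, ‖w s‖ ^ 2 * B + 2 * (B * ∑ s, ‖w s‖ ^ 2) := by
        gcongr with s
        · exact hB s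
        · exact sum_sum_mul_mul_le_of_sum_le (fun _ _ => sq_nonneg _) hrow hB _
    _ = 3 * B * ∑ r, ‖w r‖ ^ 2 := by rw [← Finset.sum_mul]; ring

end Eigenvector

end hilbertKernel

theorem injective_of_pairwise_le_abs_sub {ι : Type*} {lam : ι → ℝ} {δ : ℝ} (hδ : 0 < δ)
    (hsep : Pairwise fun r s => δ ≤ |lam r - lam s|) : Function.Injective lam := by
  intro r s h
  by_contra hrs
  have : δ ≤ |lam r - lam s| := hsep hrs
  rw [h, sub_self, abs_zero] at this
  linarith

noncomputable def hilbertMatrix {ι : Type*} (lam : ι → ℝ) : Matrix ι ι ℂ :=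
  Matrix.of fun r s => I * hilbertKernel lam r s

noncomputable def hilbertForm {ι : Type*} [Fintype ι] (lam : ι → ℝ) (z : ι → ℂ) : ℂ :=
  ∑ r, ∑ s, z r * conj (z s) * (hilbertKernel lam r s : ℂ)

theorem isHermitian_hilbertMatrix {ι : Type*} (lam : ι → ℝ) : (hilbertMatrix lam).IsHermitian := by
  ext r s
  simp [hilbertMatrix, hilbertKernel.antisymm lam r s]

section HilbertMatrix

variable {ι : Type*} [Fintype ι] [DecidableEq ι]

theorem hilbertForm_eq_I_mul_inner (lam : ι → ℝ) (z : ι → ℂ) :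
    hilbertForm lam z =
      I * inner ℂ (Matrix.toEuclideanLin (hilbertMatrix lam) (WithLp.toLp 2 z))
        (WithLp.toLp 2 z) := by
  simp only [hilbertForm, EuclideanSpace.inner_eq_star_dotProduct, hilbertMatrix,
    Matrix.toLpLin_apply, dotProduct, Matrix.mulVec, Matrix.of_apply, Pi.star_apply, star_sum,
    star_mul', RCLike.star_def, conj_I, conj_ofReal, mul_sum]
  refine sum_congr rfl fun r _ => sum_congr rfl fun s _ => ?_
  linear_combination (z r * conj (z s) * (hilbertKernel lam r s : ℂ)) * I_mul_I

theorem abs_le_of_hasEigenvalue_hilbertMatrix {lam : ι → ℝ} {δ : ℝ} (hδ : 0 < δ)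
    (hsep : Pairwise fun r s => δ ≤ |lam r - lam s|) {μ : ℝ}
    (hμ : Module.End.HasEigenvalue (Matrix.toEuclideanLin (hilbertMatrix lam)) μ) :
    |μ| ≤ π / δ := by
  obtain ⟨v, hv⟩ := hμ.exists_hasEigenvector
  have hw : ∀ r, ∑ s, (hilbertKernel lam r s : ℂ) * v s = I * (-μ : ℝ) * v r := by
    intro r
    have := congrArg (· r) (Module.End.mem_eigenspace_iff.1 hv.1)
    simp only [hilbertMatrix, Matrix.toLpLin_apply, Matrix.mulVec, dotProduct, Matrix.of_apply,
      PiLp.smul_apply, smul_eq_mul, mul_assoc, ← mul_sum] at this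
    push_cast
    linear_combination (-I) * this + (∑ s, (hilbertKernel lam r s : ℂ) * v s) * I_mul_I
  have hle := hilbertKernel.eigenvalue_sq_mul_le (injective_of_pairwise_le_abs_sub hδ hsep)
    (hilbertKernel.sum_sq_le hδ hsep) hw
  have hpos : 0 < ∑ r, ‖v r‖ ^ 2 := by
    rw [← EuclideanSpace.norm_sq_eq]
    exact pow_pos (norm_pos_iff.2 hv.2) 2
  have hsq : μ ^ 2 ≤ (π / δ) ^ 2 :=
    calc μ ^ 2 ≤ 3 * (π ^ 2 / (3 * δ ^ 2)) := by simpa using le_of_mul_le_mul_right hle hpos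
      _ = (π / δ) ^ 2 := by field_simp
  simpa [abs_of_pos (div_pos pi_pos hδ)] using sq_le_sq.1 hsq

end HilbertMatrix

theorem norm_hilbertForm_le {ι : Type*} [Fintype ι] {lam : ι → ℝ} {δ : ℝ} (hδ : 0 < δ)
    (hsep : Pairwise fun r s => δ ≤ |lam r - lam s|) (z : ι → ℂ) :
    ‖hilbertForm lam z‖ ≤ π / δ * ∑ r, ‖z r‖ ^ 2 := by
  classical
  have hT := Matrix.isSymmetric_toEuclideanLin_iff.2 (isHermitian_hilbertMatrix lam)
  rw [hilbertForm_eq_I_mul_inner, norm_mul, norm_I, one_mul, ← EuclideanSpace.norm_sq_eq]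
  exact hT.norm_inner_map_self_le (fun μ hμ => abs_le_of_hasEigenvalue_hilbertMatrix hδ hsep hμ) _

theorem mul_exp_mul_conj (a b : ℂ) (x y t : ℝ) :
    a * exp (I * x * t) * conj (b * exp (I * y * t)) = a * conj b * exp (I * (x - y : ℝ) * t) := by
  rw [map_mul, ← exp_conj, mul_mul_mul_comm, ← Complex.exp_add]
  simp only [map_mul, conj_I, conj_ofReal]
  push_cast; ring_nf

theorem integral_exp_I_mul {x : ℝ} (hx : x ≠ 0) (T : ℝ) :
    ∫ t in (0 : ℝ)..T, exp (I * x * t) = -I * (x : ℂ)⁻¹ * (exp (I * x * T) - 1) := by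
  have hIx : I * (x : ℂ) ≠ 0 := mul_ne_zero I_ne_zero (ofReal_ne_zero.2 hx)
  rw [integral_exp_mul_complex hIx, ofReal_zero, mul_zero, Complex.exp_zero, div_eq_mul_inv,
    mul_inv, inv_I]
  ring

theorem integral_exp_I_mul_sub {ι : Type*} [DecidableEq ι] {lam : ι → ℝ}
    (hinj : Function.Injective lam) (j k : ι) (T : ℝ) :
    ∫ t in (0 : ℝ)..T, exp (I * (lam j - lam k : ℝ) * t) =
      (if j = k then (T : ℂ) else 0) -
        I * hilbertKernel lam j k * (exp (I * (lam j - lam k : ℝ) * T) - 1) := by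
  by_cases hjk : j = k
  · subst hjk; simp
  rw [integral_exp_I_mul (sub_ne_zero.2 (hinj.ne hjk)), if_neg hjk, hilbertKernel]
  push_cast; ring

theorem norm_sq_sum_mul_exp {ι : Type*} [Fintype ι] (lam : ι → ℝ) (c : ι → ℂ) (t : ℝ) :
    ((‖∑ k, c k * exp (I * lam k * t)‖ ^ 2 : ℝ) : ℂ) =
      ∑ j, ∑ k, c j * conj (c k) * exp (I * (lam j - lam k : ℝ) * t) := by
  rw [ofReal_pow, ← mul_conj', map_sum, sum_mul_sum]
  simp only [mul_exp_mul_conj]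

theorem integral_norm_sq_sum_mul_exp {ι : Type*} [Fintype ι] {lam : ι → ℝ}
    (hinj : Function.Injective lam) (c : ι → ℂ) (T : ℝ) :
    ((∫ t in (0 : ℝ)..T, ‖∑ k, c k * exp (I * lam k * t)‖ ^ 2 : ℝ) : ℂ) =
      ((T * ∑ k, ‖c k‖ ^ 2 : ℝ) : ℂ) -
        I * (hilbertForm lam (fun k => c k * exp (I * lam k * T)) - hilbertForm lam c) := by
  classical
  have hint : ∀ j k, IntervalIntegrable
      (fun t : ℝ => c j * conj (c k) * exp (I * (lam j - lam k : ℝ) * t)) volume 0 T :=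
    fun j k => (by fun_prop : Continuous _).intervalIntegrable _ _
  rw [← intervalIntegral.integral_ofReal]
  simp only [norm_sq_sum_mul_exp]
  rw [intervalIntegral.integral_finsetSum fun j _ =>
    (by fun_prop : Continuous _).intervalIntegrable _ _]
  simp only [intervalIntegral.integral_finsetSum fun k _ => hint _ k,
    intervalIntegral.integral_const_mul, integral_exp_I_mul_sub hinj, hilbertForm,
    mul_exp_mul_conj]
  simp only [mul_sub, mul_ite, mul_zero, sum_sub_distrib, sum_ite_eq, mem_univ, if_true, mul_conj',
    ofReal_mul, ofReal_sum, ofReal_pow, mul_sum]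
  congr 1
  · exact sum_congr rfl fun k _ => mul_comm _ _
  · congr 1 <;> exact sum_congr rfl fun j _ => sum_congr rfl fun k _ => by ring

theorem integral_norm_sq_sum_mul_exp_ge {ι : Type*} [Fintype ι] {lam : ι → ℝ} {δ : ℝ}
    (hδ : 0 < δ) (hsep : Pairwise fun r s => δ ≤ |lam r - lam s|) (c : ι → ℂ) (T : ℝ) :
    (T - 2 * π / δ) * ∑ k, ‖c k‖ ^ 2 ≤
      ∫ t in (0 : ℝ)..T, ‖∑ k, c k * exp (I * lam k * t)‖ ^ 2 := by
  set d : ι → ℂ := fun k => c k * exp (I * lam k * T)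
  have hd : ‖hilbertForm lam d‖ ≤ π / δ * ∑ k, ‖c k‖ ^ 2 := by
    simpa [d, norm_mul, mul_assoc, ← ofReal_mul, norm_exp_I_mul_ofReal] using
      norm_hilbertForm_le hδ hsep d
  have hc := norm_hilbertForm_le hδ hsep c
  calc (T - 2 * π / δ) * ∑ k, ‖c k‖ ^ 2
      = T * ∑ k, ‖c k‖ ^ 2 - (π / δ * ∑ k, ‖c k‖ ^ 2 + π / δ * ∑ k, ‖c k‖ ^ 2) := by ring
    _ ≤ T * ∑ k, ‖c k‖ ^ 2 - ‖I * (hilbertForm lam d - hilbertForm lam c)‖ := by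
        rw [norm_mul, norm_I, one_mul]
        gcongr
        exact (norm_sub_le _ _).trans (add_le_add hd hc)
    _ ≤ T * ∑ k, ‖c k‖ ^ 2 - (I * (hilbertForm lam d - hilbertForm lam c)).re := by
        gcongr
        exact re_le_norm _
    _ = _ := by
        rw [← ofReal_re (∫ t in (0 : ℝ)..T, _),
          integral_norm_sq_sum_mul_exp (injective_of_pairwise_le_abs_sub hδ hsep), sub_re,
          ofReal_re]

theorem pairwise_le_abs_sub_of_le_sub_succ {n : ℕ} {lam : Fin n → ℝ} {δ : ℝ}
    (hmono : StrictMono lam)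
    (hsep : ∀ (i : ℕ) (h : i + 1 < n), lam ⟨i + 1, h⟩ - lam ⟨i, Nat.lt_of_succ_lt h⟩ ≥ δ) :
    Pairwise fun r s => δ ≤ |lam r - lam s| := by
  have key : ∀ r s : Fin n, r < s → δ ≤ lam s - lam r := by
    intro r s hrs
    have h : r.val + 1 < n := by omega
    have hnext : lam ⟨r + 1, h⟩ ≤ lam s := hmono.monotone (Fin.mk_le_of_le_val (by omega))
    linarith [hsep r h]
  intro r s hrs
  rcases hrs.lt_or_gt with h | h
  · rw [abs_sub_comm]; exact (key r s h).trans (le_abs_self _)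
  · exact (key s r h).trans (le_abs_self _)

theorem stmt_3 (n : ℕ) (lam : Fin n → ℝ) (δ : ℝ) (hδ : 0 < δ)
    (hmono : StrictMono lam)
    (hsep : ∀ (i : ℕ) (h : i + 1 < n), lam ⟨i + 1, h⟩ - lam ⟨i, Nat.lt_of_succ_lt h⟩ ≥ δ)
    (c : Fin n → ℂ) (T : ℝ) (hT : 0 < T) :
    (1 / T) * ∫ t in (0:ℝ)..T, ‖∑ k, c k * Complex.exp (Complex.I * lam k * t)‖ ^ 2 ≥
      (1 - 2 * π / (T * δ)) * ∑ k, ‖c k‖ ^ 2 ∧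
    (T > 4 * π / δ →
      (1 / T) * ∫ t in (0:ℝ)..T, ‖∑ k, c k * Complex.exp (Complex.I * lam k * t)‖ ^ 2 ≥
        (1 / 2) * ∑ k, ‖c k‖ ^ 2) := by
  have hbound := integral_norm_sq_sum_mul_exp_ge hδ
    (pairwise_le_abs_sub_of_le_sub_succ hmono hsep) c T
  have hmain : (1 - 2 * π / (T * δ)) * ∑ k, ‖c k‖ ^ 2 ≤
      (1 / T) * ∫ t in (0:ℝ)..T, ‖∑ k, c k * exp (I * lam k * t)‖ ^ 2 :=
    calc (1 - 2 * π / (T * δ)) * ∑ k, ‖c k‖ ^ 2 = (1 / T) * ((T - 2 * π / δ) * ∑ k, ‖c k‖ ^ 2) := by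
          field_simp
      _ ≤ _ := by gcongr
  refine ⟨hmain, fun hT4 => hmain.trans' ?_⟩
  have hTδ : 4 * π < T * δ := (div_lt_iff₀ hδ).1 hT4
  have hsmall : 2 * π / (T * δ) ≤ 1 / 2 := by
    rw [div_le_iff₀ (by positivity)]
    linarith
  gcongr
  linarith
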